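/- Lewis's general Comparative Possibility Rule is semantically valid: for any finite family $B_1, \ldots, B_n$ ($n \geq 1$) of subsets of $\mathcal{W}$ and any $A \subseteq \mathcal{W}$ with $A \subseteq B_1 \cup \cdots \cup B_n$, if $\$(\chi)$ is totally ordered by inclusion, then there exists $i \in \{1,\ldots,n\}$ such that every sphere $S \in \$(\chi)$ with $S \cap A \neq \emptyset$ satisfies $S \cap B_i \neq \emptyset$. -/

import Mathlib

theorem IsChain.exists_forall_le_of_finite {α ι : Type*} [Preorder α] [Nonempty ι] [Finite ι]
    {s : Set α} (hs : IsChain (· ≤ ·) s) {f : ι → α} (hf : ∀ i, f i ∈ s) :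
    ∃ j, ∀ i, f j ≤ f i := by
  have hrange : IsChain (· ≥ ·) (Set.range f) := (hs.mono (Set.range_subset_iff.2 hf)).symm
  exact (directedOn_range.1 hrange.directedOn).finite_le id

theorem exists_forall_inter_nonempty_of_subset_iUnion {W ι : Type*} [Nonempty ι] [Finite ι]
    {Sph : Set (Set W)} (hchain : IsChain (· ⊆ ·) Sph) {A : Set W} {B : ι → Set W}
    (hsub : A ⊆ ⋃ i, B i) :
    ∃ i, ∀ S ∈ Sph, (S ∩ A).Nonempty → (S ∩ B i).Nonempty := by
  by_contra! h
  choose S hS hSA hSB using h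
  obtain ⟨j, hj⟩ := hchain.exists_forall_le_of_finite hS
  obtain ⟨x, hxS, hxA⟩ := hSA j
  obtain ⟨i, hxB⟩ := Set.mem_iUnion.1 (hsub hxA)
  -- `S j` is the innermost of the chosen spheres, so `x` lies in `S i ∩ B i`.
  exact (hSB i).subset ⟨hj i hxS, hxB⟩

theorem cpr_general_general {W : Type*}
    (Sph : Set (Set W)) (hchain : IsChain (· ⊆ ·) Sph)
    (n : ℕ) (hn : 1 ≤ n) (B : Fin n → Set W) (A : Set W)
    (hsub : A ⊆ ⋃ i, B i) :
    ∃ i : Fin n, ∀ S ∈ Sph, (S ∩ A).Nonempty → (S ∩ B i).Nonempty :=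
  have : Nonempty (Fin n) := ⟨⟨0, hn⟩⟩
  exists_forall_inter_nonempty_of_subset_iUnion hchain hsub

/-- Lewis's general Comparative Possibility Rule is semantically valid:
if `A ⊆ B₁ ∪ ⋯ ∪ Bₙ` (with `n ≥ 1`) then `Bᵢ ≼ A` for some `i`, over a
nested sphere system. -/
theorem cpr_general {W : Type*} [Nonempty W]
    (Sph : Set (Set W)) (hchain : IsChain (· ⊆ ·) Sph)
    (n : ℕ) (hn : 1 ≤ n) (B : Fin n → Set W) (A : Set W)
    (hsub : A ⊆ ⋃ i, B i) :
    ∃ i : Fin n, ∀ S ∈ Sph, (S ∩ A).Nonempty → (S ∩ B i).Nonempty :=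
  cpr_general_general Sph hchain n hn B A hsub
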